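/- arXiv:2305.17372 — 4 statements merged into one kernel-verified Lean document; each statement's English description precedes it below -/
import Mathlib

section
/- Contraction of the Nash Bellman operator under global-optimum selections (the paper's Lemma 7, case 1): let q = (q₁, q₂) and q' = (q'₁, q'₂) be two Q-function pairs, let (π(s), ρ(s)) be, for each state s, a global optimal point of the stage game (q₁(s,·,·), q₂(s,·,·)), and let (π'(s), ρ'(s)) be, for each state s, a global optimal point of the stage game (q'₁(s,·,·), q'₂(s,·,·)). Let F q be the operator applied to q using the selection (π, ρ) and F q' the operator applied to q' using the selection (π', ρ'). Then ‖F q − F q'‖ ≤ γ·‖q − q'‖. -/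
/-- A mixed strategy on a finite nonempty action set: nonnegative weights summing to 1. -/
def IsMixed {A : Type*} [Fintype A] (π : A → ℝ) : Prop :=
  (∀ a, 0 ≤ π a) ∧ ∑ a, π a = 1

/-- Expected payoff of the payoff function `q` under mixed strategies `π` and `ρ`. -/
def expPay {A B : Type*} [Fintype A] [Fintype B]
    (π : A → ℝ) (ρ : B → ℝ) (q : A → B → ℝ) : ℝ :=
  ∑ a, ∑ b, π a * ρ b * q a b

/-- `(π̃, ρ̃)` is a global optimal point of the two-player stage game `(q₁, q₂)`. -/
def IsGlobalOpt {A B : Type*} [Fintype A] [Fintype B]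
    (q₁ q₂ : A → B → ℝ) (πt : A → ℝ) (ρt : B → ℝ) : Prop :=
  IsMixed πt ∧ IsMixed ρt ∧
    ∀ π ρ, IsMixed π → IsMixed ρ →
      expPay π ρ q₁ ≤ expPay πt ρt q₁ ∧ expPay π ρ q₂ ≤ expPay πt ρt q₂

/-- One component of the Nash Bellman operator: given a per-state strategy
selection `(π, ρ)`, `(F q)(s,a,b) = r(s,a,b) + γ·E_{π(s'),ρ(s')}[q(s',·,·)]`
with `s' = τ(s,a,b)`. -/
noncomputable def bellman {S A B : Type*} [Fintype A] [Fintype B]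
    (r : S → A → B → ℝ) (τ : S → A → B → S) (γ : ℝ)
    (π : S → A → ℝ) (ρ : S → B → ℝ) (q : S → A → B → ℝ) : S → A → B → ℝ :=
  fun s a b => r s a b + γ * expPay (π (τ s a b)) (ρ (τ s a b)) (q (τ s a b))

/-- Sup-norm distance between Q-function pairs:
`max_i max_{(s,a,b)} |q_i(s,a,b) − q'_i(s,a,b)|`. -/
noncomputable def qDist {S A B : Type*}
    [Fintype S] [Nonempty S] [Fintype A] [Nonempty A] [Fintype B] [Nonempty B]
    (q₁ q₂ q₁' q₂' : S → A → B → ℝ) : ℝ :=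
  max
    (Finset.univ.sup' Finset.univ_nonempty
      (fun x : S × A × B => |q₁ x.1 x.2.1 x.2.2 - q₁' x.1 x.2.1 x.2.2|))
    (Finset.univ.sup' Finset.univ_nonempty
      (fun x : S × A × B => |q₂ x.1 x.2.1 x.2.2 - q₂' x.1 x.2.1 x.2.2|))

section Aux
variable {A B : Type*} [Fintype A] [Fintype B]

lemma expPay_sub (π : A → ℝ) (ρ : B → ℝ) (f g : A → B → ℝ) :
    expPay π ρ f - expPay π ρ g = expPay π ρ (fun a b => f a b - g a b) := by
  simp [expPay, ← Finset.sum_sub_distrib, mul_sub]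

lemma abs_expPay_le {π : A → ℝ} {ρ : B → ℝ} (hπ : IsMixed π) (hρ : IsMixed ρ)
    {f : A → B → ℝ} {M : ℝ} (h : ∀ a b, |f a b| ≤ M) :
    |expPay π ρ f| ≤ M := by
  have h1 : |expPay π ρ f| ≤ ∑ a, ∑ b, π a * ρ b * M := by
    calc |expPay π ρ f| ≤ ∑ a, |∑ b, π a * ρ b * f a b| :=
          Finset.abs_sum_le_sum_abs _ _
      _ ≤ ∑ a, ∑ b, |π a * ρ b * f a b| := by
          exact Finset.sum_le_sum fun a _ => Finset.abs_sum_le_sum_abs _ _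
      _ ≤ ∑ a, ∑ b, π a * ρ b * M := by
          refine Finset.sum_le_sum fun a _ => Finset.sum_le_sum fun b _ => ?_
          rw [abs_mul, abs_mul, abs_of_nonneg (hπ.1 a), abs_of_nonneg (hρ.1 b)]
          exact mul_le_mul_of_nonneg_left (h a b)
            (mul_nonneg (hπ.1 a) (hρ.1 b))
  have h2 : ∑ a, ∑ b, π a * ρ b * M = M := by
    simp [← Finset.sum_mul, ← Finset.mul_sum, hπ.2, hρ.2]
  linarith

lemma key {π πo : A → ℝ} {ρ ρo : B → ℝ} {q q' : A → B → ℝ} {M : ℝ}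
    (hπ : IsMixed π) (hρ : IsMixed ρ) (hπo : IsMixed πo) (hρo : IsMixed ρo)
    (hopt : expPay πo ρo q ≤ expPay π ρ q)
    (hopt' : expPay π ρ q' ≤ expPay πo ρo q')
    (h : ∀ a b, |q a b - q' a b| ≤ M) :
    |expPay π ρ q - expPay πo ρo q'| ≤ M := by
  have hb1 : |expPay π ρ q - expPay π ρ q'| ≤ M := by
    rw [expPay_sub]; exact abs_expPay_le hπ hρ h
  have hb2 : |expPay πo ρo q - expPay πo ρo q'| ≤ M := by
    rw [expPay_sub]; exact abs_expPay_le hπo hρo h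
  rw [abs_le] at hb1 hb2 ⊢
  constructor <;> nlinarith [hb1.1, hb1.2, hb2.1, hb2.2]

end Aux

/-- Contraction of the Nash Bellman operator under global-optimum selections
(the paper's Lemma 7, case 1). -/
theorem bellman_contraction_globalOpt {S A B : Type*}
    [Fintype S] [Nonempty S] [Fintype A] [Nonempty A] [Fintype B] [Nonempty B]
    (r₁ r₂ : S → A → B → ℝ) (τ : S → A → B → S)
    (γ : ℝ) (hγ0 : 0 < γ) (hγ1 : γ ≤ 1)
    (q₁ q₂ q₁' q₂' : S → A → B → ℝ)
    (π : S → A → ℝ) (ρ : S → B → ℝ) (π' : S → A → ℝ) (ρ' : S → B → ℝ)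
    (hsel : ∀ s, IsGlobalOpt (q₁ s) (q₂ s) (π s) (ρ s))
    (hsel' : ∀ s, IsGlobalOpt (q₁' s) (q₂' s) (π' s) (ρ' s)) :
    qDist (bellman r₁ τ γ π ρ q₁) (bellman r₂ τ γ π ρ q₂)
        (bellman r₁ τ γ π' ρ' q₁') (bellman r₂ τ γ π' ρ' q₂')
      ≤ γ * qDist q₁ q₂ q₁' q₂' := by
  set D := qDist q₁ q₂ q₁' q₂' with hD
  have hDnn : ∀ (s : S) (a : A) (b : B),
      |q₁ s a b - q₁' s a b| ≤ D ∧ |q₂ s a b - q₂' s a b| ≤ D := by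
    intro s a b
    constructor
    · exact le_trans (Finset.le_sup'
        (fun x : S × A × B => |q₁ x.1 x.2.1 x.2.2 - q₁' x.1 x.2.1 x.2.2|)
        (Finset.mem_univ (s, a, b))) (le_max_left _ _)
    · exact le_trans (Finset.le_sup'
        (fun x : S × A × B => |q₂ x.1 x.2.1 x.2.2 - q₂' x.1 x.2.1 x.2.2|)
        (Finset.mem_univ (s, a, b))) (le_max_right _ _)
  have hpt : ∀ (s : S) (a : A) (b : B),
      |bellman r₁ τ γ π ρ q₁ s a b - bellman r₁ τ γ π' ρ' q₁' s a b| ≤ γ * D ∧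
      |bellman r₂ τ γ π ρ q₂ s a b - bellman r₂ τ γ π' ρ' q₂' s a b| ≤ γ * D := by
    intro s a b
    set t := τ s a b
    obtain ⟨hπ, hρ, hopt⟩ := hsel t
    obtain ⟨hπ', hρ', hopt'⟩ := hsel' t
    have h1 := hopt (π' t) (ρ' t) hπ' hρ'
    have h2 := hopt' (π t) (ρ t) hπ hρ
    have e1 : |expPay (π t) (ρ t) (q₁ t) - expPay (π' t) (ρ' t) (q₁' t)| ≤ D :=
      key hπ hρ hπ' hρ' h1.1 h2.1 (fun a b => (hDnn t a b).1)
    have e2 : |expPay (π t) (ρ t) (q₂ t) - expPay (π' t) (ρ' t) (q₂' t)| ≤ D :=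
      key hπ hρ hπ' hρ' h1.2 h2.2 (fun a b => (hDnn t a b).2)
    constructor
    · have : bellman r₁ τ γ π ρ q₁ s a b - bellman r₁ τ γ π' ρ' q₁' s a b =
          γ * (expPay (π t) (ρ t) (q₁ t) - expPay (π' t) (ρ' t) (q₁' t)) := by
        simp [bellman]; ring
      rw [this, abs_mul, abs_of_pos hγ0]
      exact mul_le_mul_of_nonneg_left e1 hγ0.le
    · have : bellman r₂ τ γ π ρ q₂ s a b - bellman r₂ τ γ π' ρ' q₂' s a b =
          γ * (expPay (π t) (ρ t) (q₂ t) - expPay (π' t) (ρ' t) (q₂' t)) := by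
        simp [bellman]; ring
      rw [this, abs_mul, abs_of_pos hγ0]
      exact mul_le_mul_of_nonneg_left e2 hγ0.le
  apply max_le <;>
  · apply Finset.sup'_le
    rintro ⟨s, a, b⟩ -
    first
      | exact (hpt s a b).1
      | exact (hpt s a b).2
end

section
/- Contraction of the Nash Bellman operator under saddle-point selections (the paper's Lemma 7, case 2): let q = (q₁, q₂) and q' = (q'₁, q'₂) be two Q-function pairs, let (π(s), ρ(s)) be, for each state s, a saddle point of the stage game (q₁(s,·,·), q₂(s,·,·)), and let (π'(s), ρ'(s)) be, for each state s, a saddle point of the stage game (q'₁(s,·,·), q'₂(s,·,·)). Let F q be the operator applied to q using the selection (π, ρ) and F q' the operator applied to q' using the selection (π', ρ'). Then ‖F q − F q'‖ ≤ γ·‖q − q'‖. -/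
/-- `(π̃, ρ̃)` is a saddle point of the two-player stage game `(q₁, q₂)`. -/
def IsSaddle {A B : Type*} [Fintype A] [Fintype B]
    (q₁ q₂ : A → B → ℝ) (πt : A → ℝ) (ρt : B → ℝ) : Prop :=
  IsMixed πt ∧ IsMixed ρt ∧
    (∀ π, IsMixed π → expPay π ρt q₁ ≤ expPay πt ρt q₁) ∧
    (∀ ρ, IsMixed ρ → expPay πt ρ q₂ ≤ expPay πt ρt q₂) ∧
    (∀ ρ, IsMixed ρ → expPay πt ρt q₁ ≤ expPay πt ρ q₁) ∧
    (∀ π, IsMixed π → expPay πt ρt q₂ ≤ expPay π ρt q₂)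

lemma expPay_sub_abs_le {A B : Type*} [Fintype A] [Fintype B]
    {π : A → ℝ} {ρ : B → ℝ} {f g : A → B → ℝ} {M : ℝ}
    (hπ : IsMixed π) (hρ : IsMixed ρ) (hM : ∀ a b, |f a b - g a b| ≤ M) :
    |expPay π ρ f - expPay π ρ g| ≤ M := by
  have h : expPay π ρ f - expPay π ρ g = ∑ a, ∑ b, π a * ρ b * (f a b - g a b) := by
    unfold expPay
    rw [← Finset.sum_sub_distrib]
    refine Finset.sum_congr rfl fun a _ => ?_
    rw [← Finset.sum_sub_distrib]
    refine Finset.sum_congr rfl fun b _ => ?_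
    ring
  rw [h]
  calc |∑ a, ∑ b, π a * ρ b * (f a b - g a b)|
      ≤ ∑ a, |∑ b, π a * ρ b * (f a b - g a b)| := Finset.abs_sum_le_sum_abs _ _
    _ ≤ ∑ a, ∑ b, |π a * ρ b * (f a b - g a b)| := by
        exact Finset.sum_le_sum fun a _ => Finset.abs_sum_le_sum_abs _ _
    _ ≤ ∑ a, ∑ b, π a * ρ b * M := by
        refine Finset.sum_le_sum fun a _ => Finset.sum_le_sum fun b _ => ?_
        rw [abs_mul, abs_mul, abs_of_nonneg (hπ.1 a), abs_of_nonneg (hρ.1 b)]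
        exact mul_le_mul_of_nonneg_left (hM a b)
          (mul_nonneg (hπ.1 a) (hρ.1 b))
    _ = M := by
        simp only [← Finset.sum_mul, ← Finset.mul_sum, hρ.2, mul_one, hπ.2, one_mul]

lemma saddle_val_one {A B : Type*} [Fintype A] [Fintype B]
    {q₁ q₂ q₁' q₂' : A → B → ℝ} {π : A → ℝ} {ρ : B → ℝ} {π' : A → ℝ} {ρ' : B → ℝ} {M : ℝ}
    (h : IsSaddle q₁ q₂ π ρ) (h' : IsSaddle q₁' q₂' π' ρ')
    (hM : ∀ a b, |q₁ a b - q₁' a b| ≤ M) :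
    |expPay π ρ q₁ - expPay π' ρ' q₁'| ≤ M := by
  obtain ⟨hπ, hρ, h3, _, h5, _⟩ := h
  obtain ⟨hπ', hρ', h3', _, h5', _⟩ := h'
  rw [abs_sub_le_iff]
  constructor
  · have h1 : expPay π ρ q₁ ≤ expPay π ρ' q₁ := h5 ρ' hρ'
    have h2 : expPay π ρ' q₁' ≤ expPay π' ρ' q₁' := h3' π hπ
    have := expPay_sub_abs_le hπ hρ' hM
    rw [abs_sub_le_iff] at this
    linarith [this.1]
  · have h1 : expPay π' ρ' q₁' ≤ expPay π' ρ q₁' := h5' ρ hρ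
    have h2 : expPay π' ρ q₁ ≤ expPay π ρ q₁ := h3 π' hπ'
    have := expPay_sub_abs_le hπ' hρ hM
    rw [abs_sub_le_iff] at this
    linarith [this.2]

lemma saddle_val_two {A B : Type*} [Fintype A] [Fintype B]
    {q₁ q₂ q₁' q₂' : A → B → ℝ} {π : A → ℝ} {ρ : B → ℝ} {π' : A → ℝ} {ρ' : B → ℝ} {M : ℝ}
    (h : IsSaddle q₁ q₂ π ρ) (h' : IsSaddle q₁' q₂' π' ρ')
    (hM : ∀ a b, |q₂ a b - q₂' a b| ≤ M) :
    |expPay π ρ q₂ - expPay π' ρ' q₂'| ≤ M := by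
  obtain ⟨hπ, hρ, _, h4, _, h6⟩ := h
  obtain ⟨hπ', hρ', _, h4', _, h6'⟩ := h'
  rw [abs_sub_le_iff]
  constructor
  · have h1 : expPay π ρ q₂ ≤ expPay π' ρ q₂ := h6 π' hπ'
    have h2 : expPay π' ρ q₂' ≤ expPay π' ρ' q₂' := h4' ρ hρ
    have := expPay_sub_abs_le hπ' hρ hM
    rw [abs_sub_le_iff] at this
    linarith [this.1]
  · have h1 : expPay π' ρ' q₂' ≤ expPay π ρ' q₂' := h6' π hπ
    have h2 : expPay π ρ' q₂ ≤ expPay π ρ q₂ := h4 ρ' hρ'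
    have := expPay_sub_abs_le hπ hρ' hM
    rw [abs_sub_le_iff] at this
    linarith [this.2]

/-- Contraction (Lemma 7 case 2). -/
theorem bellman_contraction_saddle {S A B : Type*}
    [Fintype S] [Nonempty S] [Fintype A] [Nonempty A] [Fintype B] [Nonempty B]
    (r₁ r₂ : S → A → B → ℝ) (τ : S → A → B → S)
    (γ : ℝ) (hγ0 : 0 < γ) (hγ1 : γ ≤ 1)
    (q₁ q₂ q₁' q₂' : S → A → B → ℝ)
    (π : S → A → ℝ) (ρ : S → B → ℝ) (π' : S → A → ℝ) (ρ' : S → B → ℝ)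
    (hsel : ∀ s, IsSaddle (q₁ s) (q₂ s) (π s) (ρ s))
    (hsel' : ∀ s, IsSaddle (q₁' s) (q₂' s) (π' s) (ρ' s)) :
    qDist (bellman r₁ τ γ π ρ q₁) (bellman r₂ τ γ π ρ q₂)
        (bellman r₁ τ γ π' ρ' q₁') (bellman r₂ τ γ π' ρ' q₂')
      ≤ γ * qDist q₁ q₂ q₁' q₂' := by
  have hγ : (0:ℝ) ≤ γ := le_of_lt hγ0
  set M := qDist q₁ q₂ q₁' q₂' with hMdef
  have hM1 : ∀ s a b, |q₁ s a b - q₁' s a b| ≤ M := fun s a b =>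
    le_trans (Finset.le_sup' (f := fun x : S × A × B =>
      |q₁ x.1 x.2.1 x.2.2 - q₁' x.1 x.2.1 x.2.2|) (Finset.mem_univ (s, a, b)))
      (le_max_left _ _)
  have hM2 : ∀ s a b, |q₂ s a b - q₂' s a b| ≤ M := fun s a b =>
    le_trans (Finset.le_sup' (f := fun x : S × A × B =>
      |q₂ x.1 x.2.1 x.2.2 - q₂' x.1 x.2.1 x.2.2|) (Finset.mem_univ (s, a, b)))
      (le_max_right _ _)
  have key1 : ∀ s, |expPay (π s) (ρ s) (q₁ s) - expPay (π' s) (ρ' s) (q₁' s)| ≤ M :=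
    fun s => saddle_val_one (hsel s) (hsel' s) (hM1 s)
  have key2 : ∀ s, |expPay (π s) (ρ s) (q₂ s) - expPay (π' s) (ρ' s) (q₂' s)| ≤ M :=
    fun s => saddle_val_two (hsel s) (hsel' s) (hM2 s)
  unfold qDist
  apply max_le <;>
  · apply Finset.sup'_le
    rintro ⟨s, a, b⟩ -
    simp only [bellman, add_sub_add_left_eq_sub, ← mul_sub, abs_mul, abs_of_nonneg hγ]
    first
    | exact mul_le_mul_of_nonneg_left (key1 (τ s a b)) hγ
    | exact mul_le_mul_of_nonneg_left (key2 (τ s a b)) hγ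
end

section
/- Deterministic form of the stochastic-approximation convergence lemma (the paper's appendix Lemma 2, with deterministic operators): let I be a finite nonempty set and equip the space of functions I → ℝ with the sup norm ‖x‖ = max_{i ∈ I} |x(i)|. Let (F_t)_{t ∈ ℕ} be maps from (I → ℝ) to (I → ℝ), let q* : I → ℝ satisfy F_t(q*) = q* for all t, let 0 ≤ β < 1, and let (λ_t) be a sequence with λ_t ≥ 0 for all t and λ_t → 0, such that ‖F_t(q) − F_t(q*)‖ ≤ β·‖q − q*‖ + λ_t for all q : I → ℝ and all t. Let (α_t) satisfy 0 < α_t < 1 for all t, ∑_{t=0}^{∞} α_t = ∞, and ∑_{t=0}^{∞} α_t² < ∞. Then for any initial q⁰ : I → ℝ, the iteration q^{t+1} = (1 − α_t)·q^t + α_t·F_t(q^t) converges to q* (in the sup norm) as t → ∞. -/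
open Filter

/-- Deterministic form of the stochastic-approximation convergence lemma
(the paper's appendix Lemma 2, with deterministic operators): on the space of
functions `I → ℝ` over a finite nonempty index set `I`, equipped with the sup
norm, if each `F_t` fixes `q*` and is a `λ_t`-pseudo-contraction towards `q*`
with modulus `β < 1` and `λ_t → 0`, and the step sizes `α_t ∈ (0,1)` satisfy
`∑ α_t = ∞` and `∑ α_t² < ∞`, then the iteration
`q^{t+1} = (1 − α_t)·q^t + α_t·F_t(q^t)` converges to `q*` in the sup norm. -/
theorem stochastic_approximation_deterministic
    {I : Type*} [Fintype I] [Nonempty I]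
    (F : ℕ → (I → ℝ) → (I → ℝ)) (qstar : I → ℝ)
    (hfix : ∀ t, F t qstar = qstar)
    (β : ℝ) (hβ0 : 0 ≤ β) (hβ1 : β < 1)
    (lam : ℕ → ℝ) (hlam0 : ∀ t, 0 ≤ lam t)
    (hlam : Tendsto lam atTop (nhds 0))
    (hcontr : ∀ t, ∀ q : I → ℝ, ‖F t q - F t qstar‖ ≤ β * ‖q - qstar‖ + lam t)
    (α : ℕ → ℝ) (hα0 : ∀ t, 0 < α t) (hα1 : ∀ t, α t < 1)
    (hαdiv : Tendsto (fun n => ∑ t ∈ Finset.range n, α t) atTop atTop)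
    (hαsq : Summable fun t => (α t) ^ 2)
    (q : ℕ → I → ℝ)
    (hrec : ∀ t, q (t + 1) = (1 - α t) • q t + α t • F t (q t)) :
    Tendsto q atTop (nhds qstar) := by
  set c : ℝ := 1 - β with hc
  have hc0 : 0 < c := by rw [hc]; linarith
  have hc1 : c ≤ 1 := by rw [hc]; linarith
  set e : ℕ → ℝ := fun t => ‖q t - qstar‖ with he
  have he0 : ∀ t, 0 ≤ e t := fun t => norm_nonneg _
  -- one-step recursion bound
  have key : ∀ t, e (t + 1) ≤ (1 - c * α t) * e t + α t * lam t := by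
    intro t
    have h1 : q (t + 1) - qstar
        = (1 - α t) • (q t - qstar) + α t • (F t (q t) - F t qstar) := by
      rw [hrec, hfix]; module
    have h2 : e (t + 1) ≤ (1 - α t) * e t + α t * ‖F t (q t) - F t qstar‖ := by
      have : e (t + 1) = ‖(1 - α t) • (q t - qstar) + α t • (F t (q t) - F t qstar)‖ := by
        rw [he]; simp only []; rw [h1]
      rw [this]
      calc ‖(1 - α t) • (q t - qstar) + α t • (F t (q t) - F t qstar)‖
          ≤ ‖(1 - α t) • (q t - qstar)‖ + ‖α t • (F t (q t) - F t qstar)‖ := norm_add_le _ _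
        _ = |1 - α t| * ‖q t - qstar‖ + |α t| * ‖F t (q t) - F t qstar‖ := by
            rw [norm_smul, norm_smul, Real.norm_eq_abs, Real.norm_eq_abs]
        _ = (1 - α t) * e t + α t * ‖F t (q t) - F t qstar‖ := by
            rw [abs_of_nonneg (by linarith [hα1 t] : (0:ℝ) ≤ 1 - α t),
              abs_of_nonneg (hα0 t).le]
    have h3 := hcontr t (q t)
    have h4 : α t * ‖F t (q t) - F t qstar‖ ≤ α t * (β * e t + lam t) :=
      mul_le_mul_of_nonneg_left h3 (hα0 t).le
    have : (1 - c * α t) * e t + α t * lam t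
        = (1 - α t) * e t + α t * (β * e t + lam t) := by rw [hc]; ring
    linarith
  -- reduce to the error sequence
  rw [tendsto_iff_norm_sub_tendsto_zero]
  rw [Metric.tendsto_atTop]
  intro ε hε
  set ε' : ℝ := ε / 2 with hε'
  have hε'0 : 0 < ε' := by positivity
  -- choose T with lam t ≤ c * ε' for t ≥ T
  have hlamT : ∃ T, ∀ t ≥ T, lam t ≤ c * ε' := by
    have := (Metric.tendsto_atTop.mp hlam) (c * ε') (by positivity)
    obtain ⟨T, hT⟩ := this
    exact ⟨T, fun t ht => by
      have := hT t ht
      rw [Real.dist_eq, sub_zero] at this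
      exact le_of_lt (lt_of_le_of_lt (le_abs_self _) this)⟩
  obtain ⟨T, hT⟩ := hlamT
  set f : ℕ → ℝ := fun n => max (e (T + n) - ε') 0 with hf
  have hf0 : ∀ n, 0 ≤ f n := fun n => le_max_right _ _
  have hr0 : ∀ t, 0 ≤ 1 - c * α t := by
    intro t
    have h1 : c * α t ≤ 1 * 1 := mul_le_mul hc1 (hα1 t).le (hα0 t).le zero_le_one
    linarith
  have hfstep : ∀ n, f (n + 1) ≤ (1 - c * α (T + n)) * f n := by
    intro n
    have hlamn : lam (T + n) ≤ c * ε' := hT (T + n) (Nat.le_add_right T n)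
    have hk := key (T + n)
    have hle : e (T + n) - ε' ≤ f n := le_max_left _ _
    have hrn := hr0 (T + n)
    have hprod : (1 - c * α (T + n)) * (e (T + n) - ε') ≤ (1 - c * α (T + n)) * f n :=
      mul_le_mul_of_nonneg_left hle hrn
    have h5 : e (T + (n + 1)) - ε' ≤ (1 - c * α (T + n)) * f n := by
      have harith : T + (n + 1) = (T + n) + 1 := by ring
      rw [harith]
      nlinarith [mul_nonneg (hα0 (T + n)).le (sub_nonneg.mpr hlamn),
        mul_nonneg (mul_nonneg hc0.le (hα0 (T + n)).le) hε'0.le]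
    exact max_le h5 (mul_nonneg hrn (hf0 n))
  -- iterate
  have hiter : ∀ n, f n ≤ (∏ k ∈ Finset.range n, (1 - c * α (T + k))) * f 0 := by
    intro n
    induction n with
    | zero => simp
    | succ n ih =>
      calc f (n + 1) ≤ (1 - c * α (T + n)) * f n := hfstep n
        _ ≤ (1 - c * α (T + n)) * ((∏ k ∈ Finset.range n, (1 - c * α (T + k))) * f 0) :=
            mul_le_mul_of_nonneg_left ih (hr0 (T + n))
        _ = (∏ k ∈ Finset.range (n + 1), (1 - c * α (T + k))) * f 0 := by
            rw [Finset.prod_range_succ]; ring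
  -- bound the product by an exponential
  have hprodexp : ∀ n, (∏ k ∈ Finset.range n, (1 - c * α (T + k)))
      ≤ Real.exp (-(c * ∑ k ∈ Finset.range n, α (T + k))) := by
    intro n
    calc (∏ k ∈ Finset.range n, (1 - c * α (T + k)))
        ≤ ∏ k ∈ Finset.range n, Real.exp (-(c * α (T + k))) := by
          apply Finset.prod_le_prod
          · intro k _; exact hr0 (T + k)
          · intro k _
            have := Real.add_one_le_exp (-(c * α (T + k)))
            linarith
      _ = Real.exp (∑ k ∈ Finset.range n, -(c * α (T + k))) := (Real.exp_sum _ _).symm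
      _ = Real.exp (-(c * ∑ k ∈ Finset.range n, α (T + k))) := by
          simp [Finset.mul_sum]
  -- the partial sums of the shifted α diverge
  have hS : Tendsto (fun n => ∑ k ∈ Finset.range n, α (T + k)) atTop atTop := by
    have hsplit : ∀ n, ∑ k ∈ Finset.range n, α (T + k)
        = (∑ t ∈ Finset.range (T + n), α t) - ∑ t ∈ Finset.range T, α t := by
      intro n; rw [Finset.sum_range_add]; ring
    have hTn : Tendsto (fun n => T + n) atTop atTop :=
      tendsto_atTop_mono (fun n => Nat.le_add_left n T) tendsto_id
    have h1 : Tendsto (fun n => ∑ t ∈ Finset.range (T + n), α t) atTop atTop :=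
      hαdiv.comp hTn
    have h2 := tendsto_atTop_add_const_right atTop (-(∑ t ∈ Finset.range T, α t)) h1
    simp only [hsplit]
    simpa [sub_eq_add_neg] using h2
  have hE : Tendsto (fun n => Real.exp (-(c * ∑ k ∈ Finset.range n, α (T + k)))) atTop
      (nhds 0) := by
    apply Real.tendsto_exp_atBot.comp
    apply tendsto_neg_atBot_iff.mpr
    exact hS.const_mul_atTop hc0
  have hE' : Tendsto (fun n => Real.exp (-(c * ∑ k ∈ Finset.range n, α (T + k))) * f 0)
      atTop (nhds 0) := by
    simpa using hE.mul_const (f 0)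
  have hfto : Tendsto f atTop (nhds 0) := by
    apply tendsto_of_tendsto_of_tendsto_of_le_of_le tendsto_const_nhds hE' hf0
    intro n
    exact (hiter n).trans (mul_le_mul_of_nonneg_right (hprodexp n) (hf0 0))
  obtain ⟨N, hN⟩ := (Metric.tendsto_atTop.mp hfto) ε' hε'0
  refine ⟨T + N, fun t ht => ?_⟩
  have hTt : T ≤ t := le_trans (Nat.le_add_right T N) ht
  have hNn : N ≤ t - T := by omega
  have hfn := hN (t - T) hNn
  rw [Real.dist_eq, sub_zero] at hfn
  have hfn' : f (t - T) < ε' := lt_of_le_of_lt (le_abs_self _) hfn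
  have heq : T + (t - T) = t := by omega
  have : e t - ε' ≤ f (t - T) := by
    rw [hf]; simp only []
    rw [heq]
    exact le_max_left _ _
  rw [Real.dist_eq, sub_zero]
  have : e t < ε := by
    have := lt_of_le_of_lt this hfn'
    rw [hε'] at *
    linarith
  rw [abs_of_nonneg (he0 t)]
  exact this
end

section
/- Deterministic synchronous form of the paper's Theorem 1 (convergence of QRM-SG iterates under global-optimum selections): assume 0 < γ < 1. Let q* be a Q-function pair and (π*(s), ρ*(s)) a strategy pair for each state s such that (π*(s), ρ*(s)) is a global optimal point of the stage game (q*₁(s,·,·), q*₂(s,·,·)) for every s, and such that the operator F applied to q* with the selection (π*, ρ*) satisfies F q* = q*. Let (α_t) satisfy 0 < α_t < 1 for all t, ∑_{t=0}^{∞} α_t = ∞, and ∑_{t=0}^{∞} α_t² < ∞. Define iterates by q^{t+1} = (1 − α_t)·q^t + α_t·F_t q^t, where F_t is the operator applied to q^t with any selection (π^t(s), ρ^t(s)) that is, at every state s, a global optimal point of the stage game (q^t₁(s,·,·), q^t₂(s,·,·)). Then for any initial Q-function pair q⁰, the sequence q^t converges to q* in the sup norm. -/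
open Filter

/-- Auxiliary: expected payoff under a common strategy pair is Lipschitz in the
payoff function, with respect to the sup norm. -/
lemma expPay_sub_le {A B : Type*} [Fintype A] [Fintype B]
    (π : A → ℝ) (ρ : B → ℝ) (hπ : IsMixed π) (hρ : IsMixed ρ)
    (q q' : A → B → ℝ) (M : ℝ) (hM : ∀ a b, |q a b - q' a b| ≤ M) :
    |expPay π ρ q - expPay π ρ q'| ≤ M := by
  have hEq : expPay π ρ q - expPay π ρ q'
      = ∑ a, ∑ b, π a * ρ b * (q a b - q' a b) := by
    unfold expPay
    rw [← Finset.sum_sub_distrib]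
    refine Finset.sum_congr rfl fun a _ => ?_
    rw [← Finset.sum_sub_distrib]
    refine Finset.sum_congr rfl fun b _ => ?_
    ring
  rw [hEq]
  calc |∑ a, ∑ b, π a * ρ b * (q a b - q' a b)|
      ≤ ∑ a, |∑ b, π a * ρ b * (q a b - q' a b)| := Finset.abs_sum_le_sum_abs _ _
    _ ≤ ∑ a, ∑ b, |π a * ρ b * (q a b - q' a b)| := by
        refine Finset.sum_le_sum fun a _ => Finset.abs_sum_le_sum_abs _ _
    _ ≤ ∑ a, ∑ b, π a * ρ b * M := by
        refine Finset.sum_le_sum fun a _ => Finset.sum_le_sum fun b _ => ?_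
        rw [abs_mul, abs_of_nonneg (mul_nonneg (hπ.1 a) (hρ.1 b))]
        exact mul_le_mul_of_nonneg_left (hM a b) (mul_nonneg (hπ.1 a) (hρ.1 b))
    _ = M := by
        simp_rw [mul_assoc, ← Finset.mul_sum, ← Finset.sum_mul, hρ.2, hπ.2]
        ring

/-- Auxiliary: the optimal value of a payoff function is Lipschitz in the payoff
function when both strategy pairs maximize their respective payoffs. -/
lemma value_sub_le {A B : Type*} [Fintype A] [Fintype B]
    (πt : A → ℝ) (ρt : B → ℝ) (πs : A → ℝ) (ρs : B → ℝ)
    (hπt : IsMixed πt) (hρt : IsMixed ρt) (hπs : IsMixed πs) (hρs : IsMixed ρs)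
    (q q' : A → B → ℝ)
    (hopt : expPay πs ρs q ≤ expPay πt ρt q)
    (hopt' : expPay πt ρt q' ≤ expPay πs ρs q')
    (M : ℝ) (hM : ∀ a b, |q a b - q' a b| ≤ M) :
    |expPay πt ρt q - expPay πs ρs q'| ≤ M := by
  have h1 := expPay_sub_le πt ρt hπt hρt q q' M hM
  have h2 := expPay_sub_le πs ρs hπs hρs q q' M hM
  rw [abs_le] at h1 h2 ⊢
  constructor
  · linarith [h2.1]
  · linarith [h1.2]

/-- Deterministic synchronous form of the paper's Theorem 1: the QRM-SG
iterates, updated with the Nash Bellman operator under global-optimum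
selections and Robbins–Monro step sizes, converge in the sup norm to the
fixed point `q*` whose selection is a global optimal point at every state. -/
theorem qrmsg_convergence_globalOpt {S A B : Type*}
    [Fintype S] [Nonempty S] [Fintype A] [Nonempty A] [Fintype B] [Nonempty B]
    (r₁ r₂ : S → A → B → ℝ) (τ : S → A → B → S)
    (γ : ℝ) (hγ0 : 0 < γ) (hγ1 : γ < 1)
    (q₁s q₂s : S → A → B → ℝ) (πs : S → A → ℝ) (ρs : S → B → ℝ)
    (hstar : ∀ s, IsGlobalOpt (q₁s s) (q₂s s) (πs s) (ρs s))
    (hfix₁ : bellman r₁ τ γ πs ρs q₁s = q₁s)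
    (hfix₂ : bellman r₂ τ γ πs ρs q₂s = q₂s)
    (α : ℕ → ℝ) (hα0 : ∀ t, 0 < α t) (hα1 : ∀ t, α t < 1)
    (hαdiv : Tendsto (fun n => ∑ t ∈ Finset.range n, α t) atTop atTop)
    (hαsq : Summable fun t => (α t) ^ 2)
    (q₁ q₂ : ℕ → S → A → B → ℝ)
    (π : ℕ → S → A → ℝ) (ρ : ℕ → S → B → ℝ)
    (hsel : ∀ t s, IsGlobalOpt (q₁ t s) (q₂ t s) (π t s) (ρ t s))
    (hrec₁ : ∀ t s a b, q₁ (t + 1) s a b =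
      (1 - α t) * q₁ t s a b + α t * bellman r₁ τ γ (π t) (ρ t) (q₁ t) s a b)
    (hrec₂ : ∀ t s a b, q₂ (t + 1) s a b =
      (1 - α t) * q₂ t s a b + α t * bellman r₂ τ γ (π t) (ρ t) (q₂ t) s a b) :
    Tendsto (fun t => qDist (q₁ t) (q₂ t) q₁s q₂s) atTop (nhds 0) := by
  set c : ℝ := 1 - γ with hc
  have hc0 : 0 < c := by simp [hc]; linarith
  set D : ℕ → ℝ := fun t => qDist (q₁ t) (q₂ t) q₁s q₂s with hD
  -- pointwise bounds by D
  have hpt₁ : ∀ t s a b, |q₁ t s a b - q₁s s a b| ≤ D t := fun t s a b =>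
    le_trans (Finset.le_sup' (f := fun x : S × A × B =>
      |q₁ t x.1 x.2.1 x.2.2 - q₁s x.1 x.2.1 x.2.2|) (Finset.mem_univ (s, a, b)))
      (le_max_left _ _)
  have hpt₂ : ∀ t s a b, |q₂ t s a b - q₂s s a b| ≤ D t := fun t s a b =>
    le_trans (Finset.le_sup' (f := fun x : S × A × B =>
      |q₂ t x.1 x.2.1 x.2.2 - q₂s x.1 x.2.1 x.2.2|) (Finset.mem_univ (s, a, b)))
      (le_max_right _ _)
  have hDnonneg : ∀ t, 0 ≤ D t := fun t => by
    obtain ⟨s⟩ := (inferInstance : Nonempty S)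
    obtain ⟨a⟩ := (inferInstance : Nonempty A)
    obtain ⟨b⟩ := (inferInstance : Nonempty B)
    exact le_trans (abs_nonneg _) (hpt₁ t s a b)
  -- value comparison at each state
  have hval : ∀ t s, |expPay (π t s) (ρ t s) (q₁ t s) - expPay (πs s) (ρs s) (q₁s s)| ≤ D t ∧
      |expPay (π t s) (ρ t s) (q₂ t s) - expPay (πs s) (ρs s) (q₂s s)| ≤ D t := by
    intro t s
    obtain ⟨hπt, hρt, hoptt⟩ := hsel t s
    obtain ⟨hπs, hρs, hopts⟩ := hstar s
    constructor
    · exact value_sub_le _ _ _ _ hπt hρt hπs hρs _ _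
        ((hoptt _ _ hπs hρs).1) ((hopts _ _ hπt hρt).1) _ (hpt₁ t s)
    · exact value_sub_le _ _ _ _ hπt hρt hπs hρs _ _
        ((hoptt _ _ hπs hρs).2) ((hopts _ _ hπt hρt).2) _ (hpt₂ t s)
  -- one-step contraction
  have hstep : ∀ t, D (t + 1) ≤ (1 - α t * c) * D t := by
    intro t
    have hα := hα0 t
    have hα' := hα1 t
    have key : ∀ (qc : ℕ → S → A → B → ℝ) (qcs : S → A → B → ℝ) (rr : S → A → B → ℝ),
        (∀ s a b, qc (t + 1) s a b =
          (1 - α t) * qc t s a b + α t * bellman rr τ γ (π t) (ρ t) (qc t) s a b) →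
        bellman rr τ γ πs ρs qcs = qcs →
        (∀ s, |expPay (π t s) (ρ t s) (qc t s) - expPay (πs s) (ρs s) (qcs s)| ≤ D t) →
        (∀ s a b, |qc t s a b - qcs s a b| ≤ D t) →
        ∀ s a b, |qc (t + 1) s a b - qcs s a b| ≤ (1 - α t * c) * D t := by
      intro qc qcs rr hrec hfix hv hp s a b
      have hfix' : qcs s a b = rr s a b +
          γ * expPay (πs (τ s a b)) (ρs (τ s a b)) (qcs (τ s a b)) := by
        conv_lhs => rw [← hfix]
        rfl
      have hEq : qc (t + 1) s a b - qcs s a b =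
          (1 - α t) * (qc t s a b - qcs s a b) +
          α t * γ * (expPay (π t (τ s a b)) (ρ t (τ s a b)) (qc t (τ s a b)) -
            expPay (πs (τ s a b)) (ρs (τ s a b)) (qcs (τ s a b))) := by
        rw [hrec s a b, hfix']
        simp only [bellman]
        ring
      rw [hEq]
      calc |(1 - α t) * (qc t s a b - qcs s a b) + α t * γ * _|
          ≤ |(1 - α t) * (qc t s a b - qcs s a b)| +
            |α t * γ * (expPay (π t (τ s a b)) (ρ t (τ s a b)) (qc t (τ s a b)) -
              expPay (πs (τ s a b)) (ρs (τ s a b)) (qcs (τ s a b)))| := abs_add_le _ _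
        _ ≤ (1 - α t) * D t + α t * γ * D t := by
            gcongr
            · rw [abs_mul, abs_of_nonneg (by linarith : (0:ℝ) ≤ 1 - α t)]
              exact mul_le_mul_of_nonneg_left (hp s a b) (by linarith)
            · rw [abs_mul, abs_of_nonneg (by positivity : (0:ℝ) ≤ α t * γ)]
              exact mul_le_mul_of_nonneg_left (hv (τ s a b)) (by positivity)
        _ = (1 - α t * c) * D t := by rw [hc]; ring
    have hb₁ := key q₁ q₁s r₁ (hrec₁ t) hfix₁ (fun s => (hval t s).1) (hpt₁ t)
    have hb₂ := key q₂ q₂s r₂ (hrec₂ t) hfix₂ (fun s => (hval t s).2) (hpt₂ t)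
    refine max_le (Finset.sup'_le _ _ fun x _ => hb₁ x.1 x.2.1 x.2.2)
      (Finset.sup'_le _ _ fun x _ => hb₂ x.1 x.2.1 x.2.2)
  -- geometric bound
  have hcpos : ∀ t, 0 < 1 - α t * c := by
    intro t
    nlinarith [hα0 t, hα1 t, hγ0, hγ1, mul_pos (hα0 t) hc0]
  have hbound : ∀ t, D t ≤ D 0 * ∏ k ∈ Finset.range t, (1 - α k * c) := by
    intro t
    induction t with
    | zero => simp
    | succ n ih =>
      calc D (n + 1) ≤ (1 - α n * c) * D n := hstep n
        _ ≤ (1 - α n * c) * (D 0 * ∏ k ∈ Finset.range n, (1 - α k * c)) :=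
            mul_le_mul_of_nonneg_left ih (hcpos n).le
        _ = D 0 * ∏ k ∈ Finset.range (n + 1), (1 - α k * c) := by
            rw [Finset.prod_range_succ]; ring
  have hprodle : ∀ t, ∏ k ∈ Finset.range t, (1 - α k * c)
      ≤ Real.exp (-(c * ∑ k ∈ Finset.range t, α k)) := by
    intro t
    have : ∀ k ∈ Finset.range t, 1 - α k * c ≤ Real.exp (-(α k * c)) := by
      intro k _
      have := Real.add_one_le_exp (-(α k * c))
      linarith
    calc ∏ k ∈ Finset.range t, (1 - α k * c)
        ≤ ∏ k ∈ Finset.range t, Real.exp (-(α k * c)) :=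
          Finset.prod_le_prod (fun k _ => (hcpos k).le) this
      _ = Real.exp (∑ k ∈ Finset.range t, -(α k * c)) := by rw [Real.exp_sum]
      _ = Real.exp (-(c * ∑ k ∈ Finset.range t, α k)) := by
          congr 1
          rw [Finset.sum_neg_distrib, ← Finset.sum_mul]
          ring
  have hexp : Tendsto (fun t => Real.exp (-(c * ∑ k ∈ Finset.range t, α k)))
      atTop (nhds 0) := by
    apply Real.tendsto_exp_atBot.comp
    apply tendsto_neg_atBot_iff.mpr
    exact hαdiv.const_mul_atTop hc0
  have hU : Tendsto (fun t => D 0 * Real.exp (-(c * ∑ k ∈ Finset.range t, α k)))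
      atTop (nhds 0) := by
    simpa using hexp.const_mul (D 0)
  refine squeeze_zero hDnonneg (fun t => ?_) hU
  exact (hbound t).trans (mul_le_mul_of_nonneg_left (hprodle t) (hDnonneg 0))
end
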